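/- arXiv:2511.21061 — 2 statements merged into one kernel-verified Lean document; each statement's English description precedes it below -/
import Mathlib

section
/- Let Γ be a finite simple graph each of whose edges is colored red, green, or blue, with R red edges, G green edges, and B blue edges, and let K be the number of properly 3-edge-colored copies of K4 in Γ. Then K ≤ (1/4)·(R·G·B)^{2/3}. -/
/-!
Count the quadruples `(u, v, w, x)` with `uv, wx` red, `uw, vx` green and `ux, vw` blue.
Every properly colored `K₄` contains one starting at each of its four vertices, so there are at
least `4K` of them. For a red pair `(u, v)`, `w` is one of the `d⁺(v, u)` common
neighbours seeing `v` in blue and `u` in green, and `x` one of the `d⁺(u, v)` seeing `u` in blue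
and `v` in green. Red pairs are closed under swapping, so Cauchy–Schwarz bounds
`∑ d⁺(v, u) d⁺(u, v)` by `∑ d⁺(u, v)²`, the number of `(u, v, x, y)` with `x, y` both of the
second kind; such a tuple is determined by the green edge `vx` and the blue edge `uy`. Hence
`4K ≤ G·B`, by permuting colors also `4K ≤ R·B` and `4K ≤ R·G`, and so `(4K)³ ≤ (RGB)²`.
-/

open scoped Classical

noncomputable section

namespace RainbowTri

variable {V : Type*} [Fintype V]

/-- The finset of edges of `Γ` having color `c` (red = 0, green = 1, blue = 2). -/
def colorEdges (Γ : SimpleGraph V) (col : Sym2 V → Fin 3) (c : Fin 3) : Finset (Sym2 V) :=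
  Finset.univ.filter (fun e => e ∈ Γ.edgeSet ∧ col e = c)

/-- The finset of rainbow triangles: 3-sets of pairwise adjacent vertices whose three
edges receive three distinct colors. -/
def rainbowTriangles (Γ : SimpleGraph V) (col : Sym2 V → Fin 3) : Finset (Finset V) :=
  Finset.univ.filter (fun s => ∃ a b c : V, s = {a, b, c} ∧
    Γ.Adj a b ∧ Γ.Adj a c ∧ Γ.Adj b c ∧
    col s(a, b) ≠ col s(a, c) ∧ col s(a, b) ≠ col s(b, c) ∧ col s(a, c) ≠ col s(b, c))

/-- The finset of properly 3-edge-colored copies of `K₄`: 4-sets of pairwise adjacent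
vertices on which each color appears on exactly two (disjoint) of the six edges. -/
def properK4s (Γ : SimpleGraph V) (col : Sym2 V → Fin 3) : Finset (Finset V) :=
  Finset.univ.filter (fun s => ∃ a b c d : V, s = {a, b, c, d} ∧
    Γ.Adj a b ∧ Γ.Adj a c ∧ Γ.Adj a d ∧ Γ.Adj b c ∧ Γ.Adj b d ∧ Γ.Adj c d ∧
    col s(a, b) = col s(c, d) ∧ col s(a, c) = col s(b, d) ∧ col s(a, d) = col s(b, c) ∧
    col s(a, b) ≠ col s(a, c) ∧ col s(a, b) ≠ col s(a, d) ∧ col s(a, c) ≠ col s(a, d))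

/-- The color pattern of a proper 3-edge-coloring of `K₄` on vertex set `Fin 4`:
opposite edges get the same color ({0,1},{2,3} ↦ 0; {0,2},{1,3} ↦ 1; {0,3},{1,2} ↦ 2). -/
def pairColor (i j : Fin 4) : Fin 3 :=
  ⟨((i.val ^^^ j.val) - 1) % 3, Nat.mod_lt _ (by norm_num)⟩

/-- `Γ` (with edge coloring `col`) is obtained from a blowup of a properly
3-edge-colored `K₄` by possibly adding a set of isolated vertices: vertices mapped to
`none` are isolated, vertices are adjacent iff they lie in distinct parts, and colors
between parts follow the proper `K₄`-pattern up to a permutation `σ` of the colors. -/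
def IsBlowupK4PlusIsolated (Γ : SimpleGraph V) (col : Sym2 V → Fin 3) : Prop :=
  ∃ (P : V → Option (Fin 4)) (σ : Equiv.Perm (Fin 3)),
    (∀ u v : V, Γ.Adj u v ↔ ∃ i j : Fin 4, i ≠ j ∧ P u = some i ∧ P v = some j) ∧
    (∀ (u v : V) (i j : Fin 4), P u = some i → P v = some j → Γ.Adj u v →
      col s(u, v) = σ (pairColor i j))

/-- As `IsBlowupK4PlusIsolated`, where moreover the four parts have equal size. -/
def IsBalancedBlowupK4PlusIsolated (Γ : SimpleGraph V) (col : Sym2 V → Fin 3) : Prop :=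
  ∃ (P : V → Option (Fin 4)) (σ : Equiv.Perm (Fin 3)),
    (∀ u v : V, Γ.Adj u v ↔ ∃ i j : Fin 4, i ≠ j ∧ P u = some i ∧ P v = some j) ∧
    (∀ (u v : V) (i j : Fin 4), P u = some i → P v = some j → Γ.Adj u v →
      col s(u, v) = σ (pairColor i j)) ∧
    (∀ i j : Fin 4, (Finset.univ.filter (fun v => P v = some i)).card
      = (Finset.univ.filter (fun v => P v = some j)).card)

/-- `Γ` (with edge coloring `col`) is a balanced blowup of a properly 3-edge-colored
`K₄` (no extra isolated vertices). -/
def IsBalancedBlowupK4 (Γ : SimpleGraph V) (col : Sym2 V → Fin 3) : Prop :=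
  ∃ (P : V → Fin 4) (σ : Equiv.Perm (Fin 3)),
    (∀ u v : V, Γ.Adj u v ↔ P u ≠ P v) ∧
    (∀ u v : V, Γ.Adj u v → col s(u, v) = σ (pairColor (P u) (P v))) ∧
    (∀ i j : Fin 4, (Finset.univ.filter (fun v => P v = i)).card
      = (Finset.univ.filter (fun v => P v = j)).card)

/-- `d⁺(u,v)`: the number of vertices `w` with `uw` blue and `vw` green. -/
def dPlus (Γ : SimpleGraph V) (col : Sym2 V → Fin 3) (u v : V) : ℕ :=
  (Finset.univ.filter (fun w => Γ.Adj u w ∧ col s(u, w) = 2 ∧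
    Γ.Adj v w ∧ col s(v, w) = 1)).card

/-- `d⁻(u,v)`: the number of vertices `w` with `uw` green and `vw` blue. -/
def dMinus (Γ : SimpleGraph V) (col : Sym2 V → Fin 3) (u v : V) : ℕ :=
  (Finset.univ.filter (fun w => Γ.Adj u w ∧ col s(u, w) = 1 ∧
    Γ.Adj v w ∧ col s(v, w) = 2)).card

/-- `d_K(u,v)`: the number of ordered pairs `(w,x)` with `wx` red, `uw`, `vx` green
and `ux`, `vw` blue. -/
def dK (Γ : SimpleGraph V) (col : Sym2 V → Fin 3) (u v : V) : ℕ :=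
  (Finset.univ.filter (fun p : V × V => Γ.Adj p.1 p.2 ∧ col s(p.1, p.2) = 0 ∧
    Γ.Adj u p.1 ∧ col s(u, p.1) = 1 ∧ Γ.Adj v p.2 ∧ col s(v, p.2) = 1 ∧
    Γ.Adj u p.2 ∧ col s(u, p.2) = 2 ∧ Γ.Adj v p.1 ∧ col s(v, p.1) = 2)).card

/-- Ordered pairs of vertices inducing a red edge. -/
def redPairs (Γ : SimpleGraph V) (col : Sym2 V → Fin 3) : Finset (V × V) :=
  Finset.univ.filter (fun p => Γ.Adj p.1 p.2 ∧ col s(p.1, p.2) = 0)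

/-- The set `S` of ordered tuples `(u,v,x,y)` with `uv` red, `ux`, `uy` blue and
`vx`, `vy` green (`x = y` allowed). -/
def tupleSet (Γ : SimpleGraph V) (col : Sym2 V → Fin 3) : Finset (V × V × V × V) :=
  Finset.univ.filter (fun t => Γ.Adj t.1 t.2.1 ∧ col s(t.1, t.2.1) = 0 ∧
    Γ.Adj t.1 t.2.2.1 ∧ col s(t.1, t.2.2.1) = 2 ∧
    Γ.Adj t.1 t.2.2.2 ∧ col s(t.1, t.2.2.2) = 2 ∧
    Γ.Adj t.2.1 t.2.2.1 ∧ col s(t.2.1, t.2.2.1) = 1 ∧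
    Γ.Adj t.2.1 t.2.2.2 ∧ col s(t.2.1, t.2.2.2) = 1)

end RainbowTri

open Finset

theorem Finset.sum_mul_swap_le_sum_sq {α R : Type*} [CommSemiring R] [LinearOrder R]
    [IsStrictOrderedRing R] [ExistsAddOfLE R] (s : Finset (α × α))
    (hs : ∀ p ∈ s, p.swap ∈ s) (f : α × α → R) :
    ∑ p ∈ s, f p.swap * f p ≤ ∑ p ∈ s, f p ^ 2 := by
  have hswap : ∑ p ∈ s, f p.swap ^ 2 = ∑ p ∈ s, f p ^ 2 :=
    sum_nbij' Prod.swap Prod.swap hs hs (fun _ _ ↦ rfl) (fun _ _ ↦ rfl) (fun _ _ ↦ rfl)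
  have hCS := sum_mul_sq_le_sq_mul_sq s (fun p ↦ f p.swap) f
  rw [hswap, ← sq] at hCS
  exact le_of_pow_le_pow_left₀ two_ne_zero (sum_nonneg fun _ _ ↦ sq_nonneg _) hCS

theorem Real.le_rpow_div_of_pow_le_pow {x y : ℝ} (hx : 0 ≤ x) (hy : 0 ≤ y) {m n : ℕ}
    (hn : n ≠ 0) (h : x ^ n ≤ y ^ m) : x ≤ y ^ ((m : ℝ) / n) := by
  calc x = (x ^ n) ^ (n⁻¹ : ℝ) := (Real.pow_rpow_inv_natCast hx hn).symm
    _ ≤ (y ^ m) ^ (n⁻¹ : ℝ) := by gcongr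
    _ = y ^ ((m : ℝ) / n) := by
      rw [← Real.rpow_natCast, ← Real.rpow_mul hy, div_eq_mul_inv]

namespace RainbowTri

variable {V : Type*}

section

variable (Γ : SimpleGraph V) (col : Sym2 V → Fin 3)

def IsProperK4 (a b c d : V) : Prop :=
  Γ.Adj a b ∧ Γ.Adj a c ∧ Γ.Adj a d ∧ Γ.Adj b c ∧ Γ.Adj b d ∧ Γ.Adj c d ∧
    col s(a, b) = col s(c, d) ∧ col s(a, c) = col s(b, d) ∧ col s(a, d) = col s(b, c) ∧
    col s(a, b) ≠ col s(a, c) ∧ col s(a, b) ≠ col s(a, d) ∧ col s(a, c) ≠ col s(a, d)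

namespace IsProperK4

variable {Γ col} {a b c d : V}

theorem swap_pairs (h : IsProperK4 Γ col a b c d) : IsProperK4 Γ col b a d c := by
  grind [IsProperK4, SimpleGraph.adj_comm, Sym2.eq_swap]

theorem swap_halves (h : IsProperK4 Γ col a b c d) : IsProperK4 Γ col c d a b := by
  grind [IsProperK4, SimpleGraph.adj_comm, Sym2.eq_swap]

theorem swap_left (h : IsProperK4 Γ col a b c d) : IsProperK4 Γ col a c b d := by
  grind [IsProperK4, SimpleGraph.adj_comm, Sym2.eq_swap]

theorem swap_right (h : IsProperK4 Γ col a b c d) : IsProperK4 Γ col a b d c := by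
  grind [IsProperK4, SimpleGraph.adj_comm, Sym2.eq_swap]

theorem card_eq_four [DecidableEq V] (h : IsProperK4 Γ col a b c d) : #{a, b, c, d} = 4 := by
  obtain ⟨hab, hac, had, hbc, hbd, hcd, -⟩ := h
  exact Finset.card_eq_four.2 ⟨a, b, c, d, hab.ne, hac.ne, had.ne, hbc.ne, hbd.ne, hcd.ne, rfl⟩

theorem exists_rgb [DecidableEq V] (h : IsProperK4 Γ col a b c d) :
    ∃ v w x, ({a, b, c, d} : Finset V) = {a, v, w, x} ∧ IsProperK4 Γ col a v w x ∧
      col s(a, v) = 0 ∧ col s(a, w) = 1 ∧ col s(a, x) = 2 := by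
  have hperm : ∀ p q r : Fin 3, p ≠ q → p ≠ r → q ≠ r →
      (p = 0 ∧ q = 1 ∧ r = 2) ∨ (p = 0 ∧ r = 1 ∧ q = 2) ∨ (q = 0 ∧ p = 1 ∧ r = 2) ∨
      (q = 0 ∧ r = 1 ∧ p = 2) ∨ (r = 0 ∧ p = 1 ∧ q = 2) ∨ (r = 0 ∧ q = 1 ∧ p = 2) := by
    decide
  obtain ⟨-, -, -, -, -, -, -, -, -, hbc, hbd, hcd⟩ := id h
  rcases hperm _ _ _ hbc hbd hcd with hrgb | hrgb | hrgb | hrgb | hrgb | hrgb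
  · exact ⟨b, c, d, rfl, h, hrgb⟩
  · exact ⟨b, d, c, by rw [pair_comm], h.swap_right, hrgb⟩
  · exact ⟨c, b, d, by rw [insert_comm b], h.swap_left, hrgb⟩
  · exact ⟨c, d, b, by rw [insert_comm b, pair_comm], h.swap_left.swap_right, hrgb⟩
  · exact ⟨d, b, c, by rw [pair_comm, insert_comm b], h.swap_right.swap_left, hrgb⟩
  · exact ⟨d, c, b, by rw [insert_comm b, pair_comm, insert_comm c],
      h.swap_left.swap_right.swap_left, hrgb⟩

end IsProperK4

end

variable [Fintype V]

section

variable (Γ : SimpleGraph V) (col : Sym2 V → Fin 3)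

theorem mem_properK4s {s : Finset V} :
    s ∈ properK4s Γ col ↔ ∃ a b c d, s = {a, b, c, d} ∧ IsProperK4 Γ col a b c d := by
  simp [properK4s, IsProperK4]

theorem exists_rgb_of_mem_properK4s {s : Finset V} (hs : s ∈ properK4s Γ col) {a : V}
    (ha : a ∈ s) : ∃ v w x, s = {a, v, w, x} ∧ IsProperK4 Γ col a v w x ∧
      col s(a, v) = 0 ∧ col s(a, w) = 1 ∧ col s(a, x) = 2 := by
  obtain ⟨a', b, c, d, rfl, h⟩ := (mem_properK4s Γ col).1 hs
  have of_reorder : ∀ b' c' d', IsProperK4 Γ col a b' c' d' →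
      ({a', b, c, d} : Finset V) = {a, b', c', d'} →
      ∃ v w x, ({a', b, c, d} : Finset V) = {a, v, w, x} ∧ IsProperK4 Γ col a v w x ∧
        col s(a, v) = 0 ∧ col s(a, w) = 1 ∧ col s(a, x) = 2 := by
    intro b' c' d' h' hset
    obtain ⟨v, w, x, hvwx, hrgb⟩ := h'.exists_rgb
    exact ⟨v, w, x, hset.trans hvwx, hrgb⟩
  simp only [mem_insert, mem_singleton] at ha
  rcases ha with rfl | rfl | rfl | rfl
  · exact of_reorder _ _ _ h rfl
  · exact of_reorder _ _ _ h.swap_pairs (by ext; simp only [mem_insert, mem_singleton]; tauto)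
  · exact of_reorder _ _ _ h.swap_halves (by ext; simp only [mem_insert, mem_singleton]; tauto)
  · exact of_reorder _ _ _ h.swap_pairs.swap_halves
      (by ext; simp only [mem_insert, mem_singleton]; tauto)

theorem swap_mem_redPairs {p : V × V} (hp : p ∈ redPairs Γ col) : p.swap ∈ redPairs Γ col := by
  simp only [redPairs, mem_filter, mem_univ, true_and, Prod.fst_swap, Prod.snd_swap] at hp ⊢
  exact ⟨hp.1.symm, Sym2.eq_swap ▸ hp.2⟩

theorem dK_le_dPlus_mul_dPlus (u v : V) : dK Γ col u v ≤ dPlus Γ col v u * dPlus Γ col u v := by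
  rw [dK, dPlus, dPlus, ← card_product]
  refine card_le_card fun q hq ↦ ?_
  simp only [mem_filter, mem_univ, true_and, mem_product] at hq ⊢
  tauto

theorem card_tupleSet :
    #(tupleSet Γ col) = ∑ p ∈ redPairs Γ col, dPlus Γ col p.1 p.2 ^ 2 := by
  simp only [dPlus, sq, ← card_product]
  rw [← card_sigma]
  refine card_nbij' (fun t ↦ ⟨(t.1, t.2.1), (t.2.2.1, t.2.2.2)⟩)
    (fun q ↦ (q.1.1, q.1.2, q.2.1, q.2.2)) ?_ ?_ (fun _ _ ↦ rfl) (fun _ _ ↦ rfl)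
  · intro t ht
    simp only [tupleSet, redPairs, mem_coe, mem_filter, mem_univ, true_and, mem_sigma,
      mem_product] at ht ⊢
    tauto
  · intro q hq
    simp only [tupleSet, redPairs, mem_coe, mem_filter, mem_univ, true_and, mem_sigma,
      mem_product] at hq ⊢
    tauto

theorem card_tupleSet_le :
    #(tupleSet Γ col) ≤ #(colorEdges Γ col 1) * #(colorEdges Γ col 2) := by
  rw [← card_product]
  refine card_le_card_of_injOn (fun t ↦ (s(t.2.1, t.2.2.1), s(t.1, t.2.2.2))) ?_ ?_
  · intro t ht
    simp only [tupleSet, mem_coe, mem_filter, mem_univ, true_and] at ht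
    simp [colorEdges, ht]
  · rintro ⟨u, v, x, y⟩ ht ⟨u', v', x', y'⟩ ht' heq
    simp only [tupleSet, mem_coe, mem_filter, mem_univ, true_and] at ht ht'
    simp only [Prod.mk.injEq, Sym2.eq_iff] at heq ⊢
    -- Flipping either edge would give `uv` or `vy` two different colors.
    grind [Sym2.eq_swap]

theorem four_mul_card_properK4s_le_sum_dK :
    4 * #(properK4s Γ col) ≤ ∑ p ∈ redPairs Γ col, dK Γ col p.1 p.2 := by
  have hcard : #((properK4s Γ col).sigma id) = 4 * #(properK4s Γ col) := by
    rw [card_sigma, mul_comm, ← smul_eq_mul, ← sum_const]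
    refine sum_congr rfl fun s hs ↦ ?_
    obtain ⟨a, b, c, d, rfl, h⟩ := (mem_properK4s Γ col).1 hs
    exact h.card_eq_four
  simp only [dK]
  rw [← hcard, ← card_sigma]
  refine card_le_card_of_surjOn (fun t ↦ ⟨{t.1.1, t.1.2, t.2.1, t.2.2}, t.1.1⟩) ?_
  rintro ⟨s, a⟩ hsa
  obtain ⟨hs, ha⟩ : s ∈ properK4s Γ col ∧ a ∈ s := mem_sigma.1 hsa
  obtain ⟨v, w, x, rfl, h, hv, hw, hx⟩ := exists_rgb_of_mem_properK4s Γ col hs ha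
  refine ⟨⟨(a, v), (w, x)⟩, ?_, rfl⟩
  simp only [redPairs, mem_coe, mem_sigma, mem_filter, mem_univ, true_and]
  grind [IsProperK4]

theorem four_mul_card_properK4s_le :
    4 * #(properK4s Γ col) ≤ #(colorEdges Γ col 1) * #(colorEdges Γ col 2) :=
  calc 4 * #(properK4s Γ col)
      ≤ ∑ p ∈ redPairs Γ col, dK Γ col p.1 p.2 := four_mul_card_properK4s_le_sum_dK Γ col
    _ ≤ ∑ p ∈ redPairs Γ col, dPlus Γ col p.swap.1 p.swap.2 * dPlus Γ col p.1 p.2 :=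
      sum_le_sum fun p _ ↦ dK_le_dPlus_mul_dPlus Γ col p.1 p.2
    _ ≤ ∑ p ∈ redPairs Γ col, dPlus Γ col p.1 p.2 ^ 2 :=
      sum_mul_swap_le_sum_sq _ (fun _ ↦ swap_mem_redPairs Γ col) fun p ↦ dPlus Γ col p.1 p.2
    _ = #(tupleSet Γ col) := (card_tupleSet Γ col).symm
    _ ≤ #(colorEdges Γ col 1) * #(colorEdges Γ col 2) := card_tupleSet_le Γ col

theorem properK4s_perm_comp (σ : Equiv.Perm (Fin 3)) :
    properK4s Γ (σ ∘ col) = properK4s Γ col := by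
  simp [properK4s]

theorem colorEdges_perm_comp (σ : Equiv.Perm (Fin 3)) (c : Fin 3) :
    colorEdges Γ (σ ∘ col) c = colorEdges Γ col (σ.symm c) := by
  simp [colorEdges, Equiv.eq_symm_apply]

end

/-- A 3-edge-colored graph with `R` red, `G` green, `B` blue edges and `K` properly
3-edge-colored copies of `K₄` satisfies `K ≤ (1/4)·(R·G·B)^(2/3)`. -/
theorem stmt2 (Γ : SimpleGraph V) (col : Sym2 V → Fin 3) (R G B K : ℕ)
    (hR : R = (colorEdges Γ col 0).card)
    (hG : G = (colorEdges Γ col 1).card)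
    (hB : B = (colorEdges Γ col 2).card)
    (hK : K = (properK4s Γ col).card) :
    (K : ℝ) ≤ (1 / 4) * ((R : ℝ) * G * B) ^ ((2 : ℝ) / 3) := by
  have hGB := four_mul_card_properK4s_le Γ col
  have hRB := four_mul_card_properK4s_le Γ (Equiv.swap 0 1 ∘ col)
  have hGR := four_mul_card_properK4s_le Γ (Equiv.swap 0 2 ∘ col)
  simp only [properK4s_perm_comp, colorEdges_perm_comp, Equiv.symm_swap, Equiv.swap_apply_right,
    Equiv.swap_apply_of_ne_of_ne, ne_eq, Fin.reduceEq, not_false_eq_true, ← hR, ← hG, ← hB,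
    ← hK] at hGB hRB hGR
  have hcube : (4 * K) ^ 3 ≤ (R * G * B) ^ 2 :=
    calc (4 * K) ^ 3 = 4 * K * (4 * K) * (4 * K) := by ring
      _ ≤ G * B * (R * B) * (G * R) := by gcongr
      _ = (R * G * B) ^ 2 := by ring
  have := Real.le_rpow_div_of_pow_le_pow (by positivity) (by positivity) three_ne_zero
    (by exact_mod_cast hcube : ((4 * K : ℕ) : ℝ) ^ 3 ≤ ((R * G * B : ℕ) : ℝ) ^ 2)
  push_cast at this
  linarith

end RainbowTri
end
end

section
/- Let Γ be a finite simple graph each of whose edges is colored red, green, or blue, and suppose that: (a) for every pair of edges e1, e2 of distinct colors c1 and c2, some edge of the third color joins an endpoint of e1 to an endpoint of e2; and (b) there exists an integer d ≥ 1 such that every vertex of Γ is incident to exactly d red, exactly d green, and exactly d blue edges. Then Γ is a balanced blowup of a properly 3-edge-colored K4. -/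
open scoped Classical

noncomputable section

/-!
Condition (a), applied to two edges `uv`, `uw` of distinct colours `c ≠ c'`, forces `vw` to be
an edge of the third colour. Hence if `uv` has colour `c`, the `c'`-neighbourhood of `u` lies in
the neighbourhood of `v` of the third colour, and by (b) the two coincide. For a fixed red edge
`u₀x`, these identities show that taking coloured neighbourhoods permutes the four sets
`N_red(x)`, `N_red(u₀)`, `N_green(u₀)`, `N_blue(u₀)` exactly as it permutes the parts of a
blown-up `K₄`; a second use of (a) shows that they cover every vertex, and by (b) each has `d`
elements.
-/

namespace RainbowTri

variable {V : Type*} {Γ : SimpleGraph V} {col : Sym2 V → Fin 3}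

def ThirdColorJoins (Γ : SimpleGraph V) (col : Sym2 V → Fin 3) : Prop :=
  ∀ a b a' b' : V, Γ.Adj a b → Γ.Adj a' b' → col s(a, b) ≠ col s(a', b') →
    ∃ x y : V, (x = a ∨ x = b) ∧ (y = a' ∨ y = b') ∧ Γ.Adj x y ∧
      col s(x, y) ≠ col s(a, b) ∧ col s(x, y) ≠ col s(a', b')

lemma ThirdColorJoins.mem_of_adj_closed (h : ThirdColorJoins Γ col) {S : Set V}
    (hS : ∀ ⦃x y⦄, x ∈ S → Γ.Adj x y → y ∈ S) {u v z z' : V} (hu : u ∈ S) (huv : Γ.Adj u v)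
    (hzz' : Γ.Adj z z') (hc : col s(z, z') ≠ col s(u, v)) : z ∈ S := by
  obtain ⟨x, y, hx, hy, hxy, -, -⟩ := h z z' u v hzz' huv hc
  have hyS : y ∈ S := by
    rcases hy with rfl | rfl
    exacts [hu, hS hu huv]
  have hxS : x ∈ S := hS hyS hxy.symm
  rcases hx with rfl | rfl
  exacts [hxS, hS hxS hzz'.symm]

-- In `Fin 3` the colour distinct from two distinct colours `c`, `c'` is `-(c + c')`.
lemma eq_neg_add_of_ne_of_ne : ∀ x c c' : Fin 3, c ≠ c' → x ≠ c → x ≠ c' → x = -(c + c') := by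
  decide

lemma neg_add_ne_right_of_ne : ∀ c c' : Fin 3, c ≠ c' → -(c' + c) ≠ c' := by
  decide

lemma pairColor_comm : ∀ i j : Fin 4, pairColor i j = pairColor j i := by
  decide

lemma exists_pairColor_eq : ∀ (i : Fin 4) (c : Fin 3), ∃ j, j ≠ i ∧ pairColor i j = c := by
  decide

lemma pairColor_zero_ne_pairColor_zero : ∀ i j : Fin 4, i ≠ 0 → j ≠ 0 → i ≠ j →
    pairColor 0 j ≠ pairColor 0 i := by
  decide

lemma pairColor_eq_neg_add : ∀ i j : Fin 4, i ≠ 0 → j ≠ 0 → i ≠ j →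
    pairColor i j = -(pairColor 0 i + pairColor 0 j) := by
  decide

variable [Fintype V]

def nbr (Γ : SimpleGraph V) (col : Sym2 V → Fin 3) (z : V) (c : Fin 3) : Finset V :=
  Finset.univ.filter (fun w => Γ.Adj z w ∧ col s(z, w) = c)

@[simp]
lemma mem_nbr {z w : V} {c : Fin 3} : w ∈ nbr Γ col z c ↔ Γ.Adj z w ∧ col s(z, w) = c := by
  simp [nbr]

lemma mem_nbr_comm {u v : V} {c : Fin 3} : v ∈ nbr Γ col u c ↔ u ∈ nbr Γ col v c := by
  simp only [mem_nbr, Γ.adj_comm, Sym2.eq_swap]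

def IsColorRegular (Γ : SimpleGraph V) (col : Sym2 V → Fin 3) (d : ℕ) : Prop :=
  ∀ (v : V) (c : Fin 3), (nbr Γ col v c).card = d

lemma IsColorRegular.nbr_nonempty {d : ℕ} (hreg : IsColorRegular Γ col d) (hd : 0 < d)
    (v : V) (c : Fin 3) : (nbr Γ col v c).Nonempty :=
  Finset.card_pos.1 (hreg v c ▸ hd)

namespace ThirdColorJoins

lemma mem_nbr_of_mem_nbr (h : ThirdColorJoins Γ col) {u v w : V} {c c' : Fin 3}
    (hv : v ∈ nbr Γ col u c) (hw : w ∈ nbr Γ col u c') (hc : c ≠ c') :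
    w ∈ nbr Γ col v (-(c + c')) := by
  rw [mem_nbr] at hv hw ⊢
  obtain ⟨x, y, hx, hy, hxy, hxc, hxc'⟩ :=
    h u v u w hv.1 hw.1 (by rw [hv.2, hw.2]; exact hc)
  rw [hv.2] at hxc
  rw [hw.2] at hxc'
  rcases hx with rfl | rfl <;> rcases hy with rfl | rfl
  · exact absurd hxy (Γ.loopless.irrefl _)
  · exact absurd hw.2 hxc'
  · exact absurd (Sym2.eq_swap ▸ hv.2) hxc
  · exact ⟨hxy, eq_neg_add_of_ne_of_ne _ c c' hc hxc hxc'⟩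

lemma nbr_eq_nbr (h : ThirdColorJoins Γ col) {d : ℕ} (hreg : IsColorRegular Γ col d)
    {u v : V} {c c' : Fin 3} (hv : v ∈ nbr Γ col u c) (hc : c ≠ c') :
    nbr Γ col u c' = nbr Γ col v (-(c + c')) :=
  Finset.eq_of_subset_of_card_le (fun _ hw ↦ h.mem_nbr_of_mem_nbr hv hw hc)
    (by rw [hreg, hreg])

lemma nbr_eq_nbr_of_mem_nbr_of_ne (h : ThirdColorJoins Γ col) {d : ℕ}
    (hreg : IsColorRegular Γ col d) {u z z' : V} {a b : Fin 3} (hz : z ∈ nbr Γ col u a)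
    (hz' : z' ∈ nbr Γ col u b) (hab : a ≠ b) : nbr Γ col z a = nbr Γ col z' b := by
  have hzz' : z ∈ nbr Γ col z' (-(b + a)) := h.nbr_eq_nbr hreg hz' hab.symm ▸ hz
  rw [h.nbr_eq_nbr hreg hzz' (neg_add_ne_right_of_ne a b hab)]
  congr 1
  abel

lemma nbr_eq_nbr_of_mem_nbr (h : ThirdColorJoins Γ col) {d : ℕ}
    (hreg : IsColorRegular Γ col d) (hd : 0 < d) {u z z' : V} {a b : Fin 3}
    (hz : z ∈ nbr Γ col u a) (hz' : z' ∈ nbr Γ col u b) : nbr Γ col z a = nbr Γ col z' b := by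
  rcases ne_or_eq a b with hab | rfl
  · exact h.nbr_eq_nbr_of_mem_nbr_of_ne hreg hz hz' hab
  · obtain ⟨w, hw⟩ := hreg.nbr_nonempty hd u (a + 1)
    have ha : a ≠ a + 1 := by simp
    exact (h.nbr_eq_nbr_of_mem_nbr_of_ne hreg hz hw ha).trans
      (h.nbr_eq_nbr_of_mem_nbr_of_ne hreg hz' hw ha).symm

lemma nbr_eq_nbr_of_mem_nbr_of_mem_nbr (h : ThirdColorJoins Γ col) {d : ℕ}
    (hreg : IsColorRegular Γ col d) (hd : 0 < d) {u v z : V} {c : Fin 3}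
    (hv : v ∈ nbr Γ col u c) (hz : z ∈ nbr Γ col v c) (c' : Fin 3) :
    nbr Γ col z c' = nbr Γ col u c' := by
  have hu : u ∈ nbr Γ col v c := mem_nbr_comm.1 hv
  rcases eq_or_ne c c' with rfl | hc
  · exact h.nbr_eq_nbr_of_mem_nbr hreg hd hz hu
  rw [h.nbr_eq_nbr hreg (mem_nbr_comm.1 hz) hc,
    h.nbr_eq_nbr hreg hu (neg_add_ne_right_of_ne c' c hc.symm).symm]
  congr 1
  abel

end ThirdColorJoins

def PartsFollowPairColor (Γ : SimpleGraph V) (col : Sym2 V → Fin 3) (pt : Fin 4 → Finset V) :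
    Prop :=
  ∀ i j : Fin 4, i ≠ j → ∀ z ∈ pt i, nbr Γ col z (pairColor i j) = pt j

lemma PartsFollowPairColor.eq_of_mem {pt : Fin 4 → Finset V}
    (hpt : PartsFollowPairColor Γ col pt) {i j : Fin 4} {z : V} (hi : z ∈ pt i)
    (hj : z ∈ pt j) : i = j := by
  by_contra hij
  rw [← hpt i j hij z hi, mem_nbr] at hj
  exact Γ.loopless.irrefl z hj.1

lemma PartsFollowPairColor.exists_mem_of_adj {pt : Fin 4 → Finset V}
    (hpt : PartsFollowPairColor Γ col pt) {i : Fin 4} {z w : V} (hz : z ∈ pt i)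
    (hzw : Γ.Adj z w) : ∃ j, j ≠ i ∧ pairColor i j = col s(z, w) ∧ w ∈ pt j := by
  obtain ⟨j, hji, hj⟩ := exists_pairColor_eq i (col s(z, w))
  refine ⟨j, hji, hj, ?_⟩
  rw [← hpt i j hji.symm z hz, hj, mem_nbr]
  exact ⟨hzw, rfl⟩

lemma PartsFollowPairColor.isBalancedBlowupK4 {pt : Fin 4 → Finset V}
    (hpt : PartsFollowPairColor Γ col pt) (hcover : ∀ z, ∃ i, z ∈ pt i)
    (hcard : ∀ i j, (pt i).card = (pt j).card) : IsBalancedBlowupK4 Γ col := by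
  choose P hP using hcover
  have hPeq : ∀ {z i}, z ∈ pt i → P z = i := fun hz ↦ hpt.eq_of_mem (hP _) hz
  have hadj : ∀ {u v}, Γ.Adj u v → P v ≠ P u ∧ pairColor (P u) (P v) = col s(u, v) := by
    intro u v huv
    obtain ⟨j, hj, hjc, hv⟩ := hpt.exists_mem_of_adj (hP u) huv
    rw [hPeq hv]
    exact ⟨hj, hjc⟩
  refine ⟨P, 1, fun u v ↦ ⟨fun huv ↦ (hadj huv).1.symm, fun huv ↦ ?_⟩,
    fun u v huv ↦ (hadj huv).2.symm, fun i j ↦ ?_⟩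
  · have hv := hP v
    rw [← hpt _ _ huv u (hP u), mem_nbr] at hv
    exact hv.1
  · have hpart : ∀ k, Finset.univ.filter (fun v ↦ P v = k) = pt k := fun k ↦ by
      ext z
      simp only [Finset.mem_filter, Finset.mem_univ, true_and]
      exact ⟨fun hz ↦ hz ▸ hP z, hPeq⟩
    rw [hpart, hpart, hcard]

-- Intended for an edge `ux` of colour `0`, so that `u` lies in part `0`.
def k4Parts (Γ : SimpleGraph V) (col : Sym2 V → Fin 3) (u x : V) (i : Fin 4) : Finset V :=
  if i = 0 then nbr Γ col x 0 else nbr Γ col u (pairColor 0 i)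

lemma ThirdColorJoins.partsFollowPairColor_k4Parts (h : ThirdColorJoins Γ col) {d : ℕ}
    (hreg : IsColorRegular Γ col d) (hd : 0 < d) {u x : V} (hx : x ∈ nbr Γ col u 0) :
    PartsFollowPairColor Γ col (k4Parts Γ col u x) := by
  intro i j hij z hz
  rcases eq_or_ne i 0 with rfl | hi <;> rcases eq_or_ne j 0 with rfl | hj
  · exact absurd rfl hij
  · simp only [k4Parts, if_neg hj] at hz ⊢
    exact h.nbr_eq_nbr_of_mem_nbr_of_mem_nbr hreg hd hx hz _
  · simp only [k4Parts, if_neg hi] at hz ⊢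
    rw [pairColor_comm]
    exact h.nbr_eq_nbr_of_mem_nbr hreg hd hz hx
  · simp only [k4Parts, if_neg hi, if_neg hj] at hz ⊢
    rw [h.nbr_eq_nbr hreg hz (pairColor_zero_ne_pairColor_zero i j hi hj hij).symm,
      pairColor_eq_neg_add i j hi hj hij]

lemma ThirdColorJoins.exists_mem_k4Parts (h : ThirdColorJoins Γ col) {d : ℕ}
    (hreg : IsColorRegular Γ col d) (hd : 0 < d) {u x : V} (hx : x ∈ nbr Γ col u 0) (z : V) :
    ∃ i, z ∈ k4Parts Γ col u x i := by
  have hpt := h.partsFollowPairColor_k4Parts hreg hd hx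
  obtain ⟨z', hz'⟩ := hreg.nbr_nonempty hd z 1
  have hux := mem_nbr.1 hx
  refine h.mem_of_adj_closed (S := {z | ∃ i, z ∈ k4Parts Γ col u x i})
    (fun _ _ ⟨_, hv⟩ hvw ↦ (hpt.exists_mem_of_adj hv hvw).imp fun _ hj ↦ hj.2.2)
    ⟨0, ?_⟩ hux.1 (mem_nbr.1 hz').1 (by rw [(mem_nbr.1 hz').2, hux.2]; decide)
  simpa [k4Parts] using mem_nbr_comm.1 hx

lemma IsColorRegular.card_k4Parts {d : ℕ} (hreg : IsColorRegular Γ col d) (u x : V)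
    (i : Fin 4) : (k4Parts Γ col u x i).card = d := by
  unfold k4Parts
  split_ifs <;> exact hreg _ _

/-- If (a) for every pair of edges of distinct colors some edge of the third color
joins an endpoint of one to an endpoint of the other, and (b) there is a `d ≥ 1` such
that every vertex is incident to exactly `d` edges of each color, then `Γ` is a
balanced blowup of a properly 3-edge-colored `K₄`. -/
theorem stmt8 (Γ : SimpleGraph V) (col : Sym2 V → Fin 3)
    (ha : ∀ a b a' b' : V, Γ.Adj a b → Γ.Adj a' b' → col s(a, b) ≠ col s(a', b') →
      ∃ x y : V, (x = a ∨ x = b) ∧ (y = a' ∨ y = b') ∧ Γ.Adj x y ∧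
        col s(x, y) ≠ col s(a, b) ∧ col s(x, y) ≠ col s(a', b'))
    (hb : ∃ d : ℕ, 1 ≤ d ∧ ∀ v : V, ∀ c : Fin 3,
      (Finset.univ.filter (fun w => Γ.Adj v w ∧ col s(v, w) = c)).card = d) :
    IsBalancedBlowupK4 Γ col := by
  obtain ⟨d, hd, hreg⟩ := hb
  replace hreg : IsColorRegular Γ col d := hreg
  have h : ThirdColorJoins Γ col := ha
  rcases isEmpty_or_nonempty V with hV | ⟨⟨u⟩⟩
  · refine PartsFollowPairColor.isBalancedBlowupK4 (pt := fun _ ↦ ∅) ?_ isEmptyElim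
      fun _ _ ↦ rfl
    simp [PartsFollowPairColor]
  obtain ⟨x, hx⟩ := hreg.nbr_nonempty hd u 0
  exact (h.partsFollowPairColor_k4Parts hreg hd hx).isBalancedBlowupK4
    (h.exists_mem_k4Parts hreg hd hx) fun i j ↦ by rw [hreg.card_k4Parts, hreg.card_k4Parts]

end RainbowTri
end
end
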